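/- Let $c$ be an odd integer with $c \equiv 1 \pmod 3$, let $f(x) = x^3 + c x + c$, and let $K$ be the splitting field of $f$ over $\mathbb{Q}$. Then the Galois group $\mathrm{Gal}(K/\mathbb{Q})$ is isomorphic to the symmetric group $S_3$. -/

import Mathlib

open Polynomial

theorem even_perm_prod {M : Type*} [CommRing M] (π : Equiv.Perm (Fin 3))
    (hπ : Equiv.Perm.sign π = 1) (x : Fin 3 → M) :
    (x (π 0) - x (π 1)) * (x (π 0) - x (π 2)) * (x (π 1) - x (π 2))
      = (x 0 - x 1) * (x 0 - x 2) * (x 1 - x 2) := by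
  have h : π = 1 ∨ π = Equiv.swap 0 1 * Equiv.swap 1 2 ∨ π = Equiv.swap 1 2 * Equiv.swap 0 1 := by
    revert hπ; revert π; decide
  rcases h with rfl | rfl | rfl
  · rfl
  · have e0 : (Equiv.swap 0 1 * Equiv.swap 1 2 : Equiv.Perm (Fin 3)) 0 = 1 := by decide
    have e1 : (Equiv.swap 0 1 * Equiv.swap 1 2 : Equiv.Perm (Fin 3)) 1 = 2 := by decide
    have e2 : (Equiv.swap 0 1 * Equiv.swap 1 2 : Equiv.Perm (Fin 3)) 2 = 0 := by decide
    rw [e0, e1, e2]; ring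
  · have e0 : (Equiv.swap 1 2 * Equiv.swap 0 1 : Equiv.Perm (Fin 3)) 0 = 2 := by decide
    have e1 : (Equiv.swap 1 2 * Equiv.swap 0 1 : Equiv.Perm (Fin 3)) 1 = 0 := by decide
    have e2 : (Equiv.swap 1 2 * Equiv.swap 0 1 : Equiv.Perm (Fin 3)) 2 = 1 := by decide
    rw [e0, e1, e2]; ring

theorem irr_aux (c : ℤ) (hodd : Odd c) :
    Irreducible (X ^ 3 + C (c : ℚ) * X + C (c : ℚ)) := by
  have hq : (X ^ 3 + C c * X + C c : ℤ[X]).Monic := by monicity!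
  have h2 : ((c : ZMod 2)) = 1 := by
    obtain ⟨k, rfl⟩ := hodd
    push_cast
    simp [show (2 : ZMod 2) = 0 by decide]
  have h2' : ((c : (ZMod 2)[X])) = 1 := by rw [← C_eq_intCast, h2, C_1]
  have hmap2 : (X ^ 3 + C c * X + C c : ℤ[X]).map (Int.castRingHom (ZMod 2))
      = X ^ 3 + X + 1 := by
    simp [Polynomial.map_add, Polynomial.map_mul, Polynomial.map_pow, map_C, map_X, h2']
  have hirr2 : Irreducible ((X ^ 3 + C c * X + C c : ℤ[X]).map (Int.castRingHom (ZMod 2))) := by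
    rw [hmap2]
    rw [irreducible_iff_roots_eq_zero_of_degree_le_three]
    · rw [Multiset.eq_zero_iff_forall_notMem]
      intro x hx
      have h3 := (mem_roots'.mp hx).2
      simp only [IsRoot, eval_add, eval_pow, eval_X, eval_one] at h3
      have key : ∀ y : ZMod 2, ¬(y ^ 3 + y + 1 = 0) := by decide
      exact key x h3
    · rw [show ((X ^ 3 + X + 1 : (ZMod 2)[X]).natDegree) = 3 by compute_degree!]; norm_num
    · rw [show ((X ^ 3 + X + 1 : (ZMod 2)[X]).natDegree) = 3 by compute_degree!]
  have hirrZ : Irreducible (X ^ 3 + C c * X + C c : ℤ[X]) :=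
    hq.irreducible_of_irreducible_map _ _ hirr2
  have h := (hq.irreducible_iff_irreducible_map_fraction_map (K := ℚ)).mp hirrZ
  have heq : (X ^ 3 + C c * X + C c : ℤ[X]).map (algebraMap ℤ ℚ)
      = X ^ 3 + C (c : ℚ) * X + C (c : ℚ) := by
    simp [Polynomial.map_add, Polynomial.map_mul, Polynomial.map_pow, map_C, map_X]
  rwa [heq] at h

theorem not_square_aux (c : ℤ) (hc3 : c % 3 = 1) (q : ℚ)
    (hq : q ^ 2 = -4 * (c : ℚ) ^ 3 - 27 * (c : ℚ) ^ 2) : False := by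
  have h0 := Rat.num_div_den q
  rw [← h0] at hq
  have hden : ((q.den : ℚ)) ≠ 0 := by exact_mod_cast q.den_nz
  field_simp at hq
  have hzz : q.num ^ 2 = (-(4 * c ^ 3) - 27 * c ^ 2) * (q.den : ℤ) ^ 2 := by
    have h' : ((q.num ^ 2 : ℤ) : ℚ) = (((-(4 * c ^ 3) - 27 * c ^ 2) * (q.den : ℤ) ^ 2 : ℤ) : ℚ) := by
      push_cast; linear_combination hq
    exact_mod_cast h'
  have h3 : ((q.num : ZMod 3)) ^ 2
      = (-(4 * (c : ZMod 3) ^ 3) - 27 * (c : ZMod 3) ^ 2) * ((q.den : ZMod 3)) ^ 2 := by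
    have := congrArg (fun z : ℤ => (z : ZMod 3)) hzz
    push_cast at this
    linear_combination this
  have hc : ((c : ZMod 3)) = 1 := by
    have h := (ZMod.intCast_eq_intCast_iff c 1 3).mpr (show c % 3 = 1 % 3 by omega)
    simpa using h
  have h31 : (-(4 * (1 : ZMod 3) ^ 3) - 27 * (1 : ZMod 3) ^ 2) = 2 := by decide
  rw [hc, h31] at h3
  have key : ∀ a b : ZMod 3, a ^ 2 = 2 * b ^ 2 → a = 0 ∧ b = 0 := by decide
  obtain ⟨hn, hd⟩ := key _ _ h3
  have hdvdn : (3 : ℤ) ∣ q.num := (ZMod.intCast_zmod_eq_zero_iff_dvd q.num 3).mp hn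
  have hdvdd : (3 : ℕ) ∣ q.den := (ZMod.natCast_eq_zero_iff q.den 3).mp hd
  have h3n : (3 : ℕ) ∣ q.num.natAbs := Int.natAbs_dvd_natAbs.mpr hdvdn
  have : (3 : ℕ) ∣ 1 := q.reduced ▸ Nat.dvd_gcd h3n hdvdd
  norm_num at this

theorem stmt_5 (c : ℤ) (hodd : Odd c) (hc3 : c % 3 = 1) :
    Nonempty ((Polynomial.X ^ 3 + Polynomial.C (c : ℚ) * Polynomial.X
      + Polynomial.C (c : ℚ)).Gal ≃* Equiv.Perm (Fin 3)) := by
  have hirr := irr_aux c hodd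
  set p : ℚ[X] := X ^ 3 + C (c : ℚ) * X + C (c : ℚ) with hp
  set K := p.SplittingField with hK
  have hdeg : p.natDegree = 3 := by rw [hp]; compute_degree!
  have hsep : p.Separable := hirr.separable
  have hsplits : (p.map (algebraMap ℚ K)).Splits := SplittingField.splits p
  have hcard3 : Fintype.card (p.rootSet K) = 3 := by
    rw [card_rootSet_eq_natDegree hsep hsplits, hdeg]
  let ψ0 : p.Gal →* Equiv.Perm (p.rootSet K) := MulAction.toPermHom _ _
  have hcoe : ∀ (σ : p.Gal) (x : p.rootSet K), ((ψ0 σ x : p.rootSet K) : K) = σ (x : K) := by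
    intro σ x; rfl
  have hinj0 : Function.Injective ψ0 := by
    haveI : Fact ((p.map (algebraMap ℚ K)).Splits) := ⟨SplittingField.splits p⟩
    have hrel : ∀ σ : p.Gal, Polynomial.Gal.galActionHom p K σ
        = (Polynomial.Gal.rootsEquivRoots p K).permCongr (ψ0 σ) := by
      intro σ; ext x; rfl
    intro σ σ' h
    apply Polynomial.Gal.galActionHom_injective p K
    rw [hrel, hrel, h]
  let e : p.rootSet K ≃ Fin 3 := Fintype.equivFinOfCardEq hcard3
  let ψ : p.Gal →* Equiv.Perm (Fin 3) :=
    { toFun := fun σ => e.permCongr (ψ0 σ)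
      map_one' := by ext i; simp
      map_mul' := by intro σ τ; ext i; simp }
  have hinjψ : Function.Injective ψ := by
    intro σ τ h
    exact hinj0 (e.permCongr.injective h)
  have hcard_dvd : (3 : ℕ) ∣ Fintype.card p.Gal := by
    have := Polynomial.Gal.prime_degree_dvd_card hirr (by rw [hdeg]; norm_num)
    rwa [hdeg, Nat.card_eq_fintype_card] at this
  have hcard_le : Fintype.card p.Gal ≤ 6 := by
    have := Fintype.card_le_of_injective ψ hinjψ
    simpa [Fintype.card_perm, Nat.factorial] using this
  have hcard_pos : 0 < Fintype.card p.Gal := Fintype.card_pos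
  have hcard : Fintype.card p.Gal = 6 := by
    by_contra hne
    have hcard3' : Fintype.card p.Gal = 3 := by omega
    have hsign : ∀ σ : p.Gal, Equiv.Perm.sign (ψ σ) = 1 := by
      intro σ
      have hp3 : σ ^ Fintype.card p.Gal = 1 := pow_card_eq_one
      rw [hcard3'] at hp3
      have h3 : (ψ σ) ^ 3 = 1 := by rw [← map_pow, hp3, map_one]
      have hs := congrArg Equiv.Perm.sign h3
      rw [map_pow, map_one] at hs
      rcases Int.units_eq_one_or (Equiv.Perm.sign (ψ σ)) with h | h
      · exact h
      · rw [h] at hs; exact absurd hs (by decide)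
    -- roots
    let r : Fin 3 → K := fun i => ((e.symm i : p.rootSet K) : K)
    have hroot : ∀ i, r i ^ 3 + algebraMap ℚ K (c : ℚ) * r i + algebraMap ℚ K (c : ℚ) = 0 := by
      intro i
      have hx : aeval ((e.symm i : p.rootSet K) : K)
          (X ^ 3 + C (c : ℚ) * X + C (c : ℚ)) = 0 := (Polynomial.mem_rootSet.mp (e.symm i).2).2
      simpa [map_add, map_mul, map_pow, aeval_X, aeval_C] using hx
    have hne' : ∀ i j : Fin 3, i ≠ j → r i ≠ r j := by
      intro i j hij h
      exact hij (e.symm.injective (Subtype.coe_injective h))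
    have h0 := hroot 0
    have h1 := hroot 1
    have h2 := hroot 2
    have hab := hne' 0 1 (by decide)
    have had := hne' 0 2 (by decide)
    have hbd := hne' 1 2 (by decide)
    have hP : r 0 ^ 2 + r 0 * r 1 + r 1 ^ 2 + algebraMap ℚ K (c : ℚ) = 0 := by
      rcases mul_eq_zero.mp (show (r 0 - r 1) *
          (r 0 ^ 2 + r 0 * r 1 + r 1 ^ 2 + algebraMap ℚ K (c : ℚ)) = 0 by
        linear_combination h0 - h1) with h | h
      · exact absurd (sub_eq_zero.mp h) hab
      · exact h
    have hPac : r 0 ^ 2 + r 0 * r 2 + r 2 ^ 2 + algebraMap ℚ K (c : ℚ) = 0 := by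
      rcases mul_eq_zero.mp (show (r 0 - r 2) *
          (r 0 ^ 2 + r 0 * r 2 + r 2 ^ 2 + algebraMap ℚ K (c : ℚ)) = 0 by
        linear_combination h0 - h2) with h | h
      · exact absurd (sub_eq_zero.mp h) had
      · exact h
    have hS : r 0 + r 1 + r 2 = 0 := by
      rcases mul_eq_zero.mp (show (r 1 - r 2) * (r 0 + r 1 + r 2) = 0 by
        linear_combination hP - hPac) with h | h
      · exact absurd (sub_eq_zero.mp h) hbd
      · exact h
    have hd : r 2 = -r 0 - r 1 := by linear_combination hS
    have ht : algebraMap ℚ K (c : ℚ) = -(r 0 ^ 2 + r 0 * r 1 + r 1 ^ 2) := by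
      linear_combination hP
    rw [ht] at h0
    have hδ2 : ((r 0 - r 1) * (r 0 - r 2) * (r 1 - r 2)) ^ 2
        = -4 * algebraMap ℚ K (c : ℚ) ^ 3 - 27 * algebraMap ℚ K (c : ℚ) ^ 2 := by
      rw [hd, ht]
      linear_combination (27 * (r 0 ^ 2 * r 1 + r 0 * r 1 ^ 2
        - r 0 ^ 2 - r 0 * r 1 - r 1 ^ 2)) * h0
    have hfix : ∀ σ : p.Gal,
        σ ((r 0 - r 1) * (r 0 - r 2) * (r 1 - r 2)) = (r 0 - r 1) * (r 0 - r 2) * (r 1 - r 2) := by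
      intro σ
      have hσr : ∀ i, σ (r i) = r (ψ σ i) := by
        intro i
        have h' : ψ σ i = e (ψ0 σ (e.symm i)) := rfl
        rw [h']
        show σ ((e.symm i : p.rootSet K) : K) = ((e.symm (e (ψ0 σ (e.symm i))) : p.rootSet K) : K)
        rw [Equiv.symm_apply_apply]
        exact (hcoe σ (e.symm i)).symm
      rw [map_mul, map_mul, map_sub, map_sub, map_sub, hσr, hσr, hσr]
      exact even_perm_prod (ψ σ) (hsign σ) r
    haveI : IsSplittingField ℚ K p := Polynomial.IsSplittingField.splittingField p
    haveI : IsGalois ℚ K := IsGalois.of_separable_splitting_field hsep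
    have hbot : IntermediateField.fixedField (⊤ : Subgroup (K ≃ₐ[ℚ] K)) = ⊥ := by
      rw [← (IntermediateField.fixingSubgroup_bot : (⊥ : IntermediateField ℚ K).fixingSubgroup = ⊤)]
      exact IsGalois.fixedField_fixingSubgroup ⊥
    have hmem : ((r 0 - r 1) * (r 0 - r 2) * (r 1 - r 2)) ∈ (⊥ : IntermediateField ℚ K) := by
      rw [← hbot]
      exact fun g => hfix g.1
    obtain ⟨qq, hqq⟩ := IntermediateField.mem_bot.mp hmem
    have hq2 : qq ^ 2 = -4 * (c : ℚ) ^ 3 - 27 * (c : ℚ) ^ 2 := by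
      apply (algebraMap ℚ K).injective
      rw [map_pow, hqq, hδ2]
      simp only [map_sub, map_mul, map_pow, map_neg, map_ofNat]
    exact not_square_aux c hc3 qq hq2
  refine ⟨MulEquiv.ofBijective ψ ?_⟩
  rw [Fintype.bijective_iff_injective_and_card]
  refine ⟨hinjψ, ?_⟩
  rw [hcard, Fintype.card_perm]
  decide
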